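/- Let G₁ and G₂ be simple connected graphs with n₁ = |V(G₁)|, n₂ = |V(G₂)| vertices and m₁ = |E(G₁)|, m₂ = |E(G₂)| edges. Then the F-index of the vertex T-join satisfies F(G₁ ∨̇_T G₂) = 8F(G₁) + F(G₂) + 12n₂M₁(G₁) + 3n₁M₁(G₂) + M₄(G₁) + 3ReZM(G₁) + 12m₁n₂² + 6m₂n₁² + n₁n₂(n₁² + n₂²). -/

import Mathlib

/-- The subdivision graph `S(G)`: a new vertex is inserted into each edge of `G`
(each edge is replaced by a path of length 2). The inserted vertices form the
right summand `↥G.edgeSet`. -/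
def Sgraph {V : Type*} (G : SimpleGraph V) : SimpleGraph (V ⊕ ↥G.edgeSet) where
  Adj x y :=
    match x, y with
    | Sum.inl v, Sum.inr e => v ∈ (e : Sym2 V)
    | Sum.inr e, Sum.inl v => v ∈ (e : Sym2 V)
    | _, _ => False
  symm := by constructor; rintro (v | e) (w | f) h <;> exact h
  loopless := by constructor; rintro (v | e) h <;> exact h

/-- The graph `R(G)`: obtained from `G` by inserting a new vertex into each edge of `G`
and joining each new vertex to the end vertices of its corresponding edge. -/
def Rgraph {V : Type*} (G : SimpleGraph V) : SimpleGraph (V ⊕ ↥G.edgeSet) where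
  Adj x y :=
    match x, y with
    | Sum.inl v, Sum.inl w => G.Adj v w
    | Sum.inl v, Sum.inr e => v ∈ (e : Sym2 V)
    | Sum.inr e, Sum.inl v => v ∈ (e : Sym2 V)
    | Sum.inr _, Sum.inr _ => False
  symm := by
    constructor
    rintro (v | e) (w | f) h
    · exact G.adj_symm h
    · exact h
    · exact h
    · exact h
  loopless := by
    constructor
    rintro (v | e) h
    · exact G.irrefl h
    · exact h

/-- The graph `Q(G)`: obtained from `G` by inserting a new vertex into each edge of `G`,
then joining by edges those pairs of new vertices lying on adjacent edges of `G`. -/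
def Qgraph {V : Type*} (G : SimpleGraph V) : SimpleGraph (V ⊕ ↥G.edgeSet) where
  Adj x y :=
    match x, y with
    | Sum.inl _, Sum.inl _ => False
    | Sum.inl v, Sum.inr e => v ∈ (e : Sym2 V)
    | Sum.inr e, Sum.inl v => v ∈ (e : Sym2 V)
    | Sum.inr e, Sum.inr f => e ≠ f ∧ ∃ v, v ∈ (e : Sym2 V) ∧ v ∈ (f : Sym2 V)
  symm := by
    constructor
    rintro (v | e) (w | f) h
    · exact h
    · exact h
    · exact h
    · exact ⟨h.1.symm, by obtain ⟨v, h1, h2⟩ := h.2; exact ⟨v, h2, h1⟩⟩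
  loopless := by
    constructor
    rintro (v | e) h
    · exact h
    · exact h.1 rfl

/-- The total graph `T(G)`: obtained from `G` by inserting a new vertex into each edge,
joining each new vertex to the end vertices of its corresponding edge, and joining by
edges those pairs of new vertices lying on adjacent edges of `G`. -/
def Tgraph {V : Type*} (G : SimpleGraph V) : SimpleGraph (V ⊕ ↥G.edgeSet) where
  Adj x y :=
    match x, y with
    | Sum.inl v, Sum.inl w => G.Adj v w
    | Sum.inl v, Sum.inr e => v ∈ (e : Sym2 V)
    | Sum.inr e, Sum.inl v => v ∈ (e : Sym2 V)
    | Sum.inr e, Sum.inr f => e ≠ f ∧ ∃ v, v ∈ (e : Sym2 V) ∧ v ∈ (f : Sym2 V)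
  symm := by
    constructor
    rintro (v | e) (w | f) h
    · exact G.adj_symm h
    · exact h
    · exact h
    · exact ⟨h.1.symm, by obtain ⟨v, h1, h2⟩ := h.2; exact ⟨v, h2, h1⟩⟩
  loopless := by
    constructor
    rintro (v | e) h
    · exact G.irrefl h
    · exact h.1 rfl

/-- The disjoint union of `H` and `K` together with all edges joining a vertex `a` of `H`
with `P a` to every vertex of `K`. -/
def joinOn {A B : Type*} (H : SimpleGraph A) (K : SimpleGraph B) (P : A → Prop) :
    SimpleGraph (A ⊕ B) where
  Adj x y :=
    match x, y with
    | Sum.inl a, Sum.inl a' => H.Adj a a'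
    | Sum.inr b, Sum.inr b' => K.Adj b b'
    | Sum.inl a, Sum.inr _ => P a
    | Sum.inr _, Sum.inl a => P a
  symm := by
    constructor
    rintro (a | b) (a' | b') h
    · exact H.adj_symm h
    · exact h
    · exact h
    · exact K.adj_symm h
  loopless := by
    constructor
    rintro (a | b) h
    · exact H.irrefl h
    · exact K.irrefl h

/-- The vertex S-join `G₁ ∨̇_S G₂`: obtained from `S(G₁)` and `G₂` by joining each vertex
of `V(G₁)` to every vertex of `G₂`. -/
def vertexSJoin {V₁ V₂ : Type*} (G₁ : SimpleGraph V₁) (G₂ : SimpleGraph V₂) :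
    SimpleGraph ((V₁ ⊕ ↥G₁.edgeSet) ⊕ V₂) :=
  joinOn (Sgraph G₁) G₂ (fun x => x.isLeft)

/-- The edge S-join `G₁ ∨̱_S G₂`: obtained from `S(G₁)` and `G₂` by joining each inserted
vertex (each vertex of `I(G₁)`) to every vertex of `G₂`. -/
def edgeSJoin {V₁ V₂ : Type*} (G₁ : SimpleGraph V₁) (G₂ : SimpleGraph V₂) :
    SimpleGraph ((V₁ ⊕ ↥G₁.edgeSet) ⊕ V₂) :=
  joinOn (Sgraph G₁) G₂ (fun x => x.isRight)

/-- The vertex R-join `G₁ ∨̇_R G₂`. -/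
def vertexRJoin {V₁ V₂ : Type*} (G₁ : SimpleGraph V₁) (G₂ : SimpleGraph V₂) :
    SimpleGraph ((V₁ ⊕ ↥G₁.edgeSet) ⊕ V₂) :=
  joinOn (Rgraph G₁) G₂ (fun x => x.isLeft)

/-- The edge R-join `G₁ ∨̱_R G₂`. -/
def edgeRJoin {V₁ V₂ : Type*} (G₁ : SimpleGraph V₁) (G₂ : SimpleGraph V₂) :
    SimpleGraph ((V₁ ⊕ ↥G₁.edgeSet) ⊕ V₂) :=
  joinOn (Rgraph G₁) G₂ (fun x => x.isRight)

/-- The vertex Q-join `G₁ ∨̇_Q G₂`. -/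
def vertexQJoin {V₁ V₂ : Type*} (G₁ : SimpleGraph V₁) (G₂ : SimpleGraph V₂) :
    SimpleGraph ((V₁ ⊕ ↥G₁.edgeSet) ⊕ V₂) :=
  joinOn (Qgraph G₁) G₂ (fun x => x.isLeft)

/-- The edge Q-join `G₁ ∨̱_Q G₂`. -/
def edgeQJoin {V₁ V₂ : Type*} (G₁ : SimpleGraph V₁) (G₂ : SimpleGraph V₂) :
    SimpleGraph ((V₁ ⊕ ↥G₁.edgeSet) ⊕ V₂) :=
  joinOn (Qgraph G₁) G₂ (fun x => x.isRight)

/-- The vertex T-join `G₁ ∨̇_T G₂`. -/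
def vertexTJoin {V₁ V₂ : Type*} (G₁ : SimpleGraph V₁) (G₂ : SimpleGraph V₂) :
    SimpleGraph ((V₁ ⊕ ↥G₁.edgeSet) ⊕ V₂) :=
  joinOn (Tgraph G₁) G₂ (fun x => x.isLeft)

/-- The edge T-join `G₁ ∨̱_T G₂`. -/
def edgeTJoin {V₁ V₂ : Type*} (G₁ : SimpleGraph V₁) (G₂ : SimpleGraph V₂) :
    SimpleGraph ((V₁ ⊕ ↥G₁.edgeSet) ⊕ V₂) :=
  joinOn (Tgraph G₁) G₂ (fun x => x.isRight)

/-- Degree of a vertex in a graph on a finite vertex type. -/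
noncomputable def gdeg {V : Type*} [Finite V] (G : SimpleGraph V) (v : V) : ℕ :=
  haveI : Fintype ↥(G.neighborSet v) := Fintype.ofFinite _
  G.degree v

/-- The forgotten topological index (F-index): `F(G) = ∑_{v ∈ V(G)} d_G(v)³`. -/
noncomputable def Findex {V : Type*} [Finite V] (G : SimpleGraph V) : ℕ :=
  haveI := Fintype.ofFinite V
  ∑ v : V, gdeg G v ^ 3

/-- The first Zagreb index: `M₁(G) = ∑_{v ∈ V(G)} d_G(v)²`. -/
noncomputable def M1 {V : Type*} [Finite V] (G : SimpleGraph V) : ℕ :=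
  haveI := Fintype.ofFinite V
  ∑ v : V, gdeg G v ^ 2

/-- `M₄(G) = ∑_{v ∈ V(G)} d_G(v)⁴`. -/
noncomputable def M4 {V : Type*} [Finite V] (G : SimpleGraph V) : ℕ :=
  haveI := Fintype.ofFinite V
  ∑ v : V, gdeg G v ^ 4

/-- The hyper Zagreb index: `HM(G) = ∑_{uv ∈ E(G)} (d_G(u) + d_G(v))²`. -/
noncomputable def HM {V : Type*} [Finite V] (G : SimpleGraph V) : ℕ :=
  haveI : Fintype ↥G.edgeSet := Fintype.ofFinite _
  ∑ e : ↥G.edgeSet,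
    Sym2.lift ⟨fun u v => (gdeg G u + gdeg G v) ^ 2,
      fun u v => by dsimp only; rw [add_comm]⟩ (e : Sym2 V)

/-- The redefined Zagreb index:
`ReZM(G) = ∑_{uv ∈ E(G)} d_G(u) d_G(v) (d_G(u) + d_G(v))`. -/
noncomputable def ReZM {V : Type*} [Finite V] (G : SimpleGraph V) : ℕ :=
  haveI : Fintype ↥G.edgeSet := Fintype.ofFinite _
  ∑ e : ↥G.edgeSet,
    Sym2.lift ⟨fun u v => gdeg G u * gdeg G v * (gdeg G u + gdeg G v),
      fun u v => by dsimp only; ring⟩ (e : Sym2 V)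

/-- The number of edges of `G`. -/
noncomputable def numEdges {V : Type*} (G : SimpleGraph V) : ℕ :=
  Nat.card ↥G.edgeSet

/-!
In `G₁ ∨̇_T G₂` a vertex `v` of `G₁` has degree `2 d(v) + n₂` (its neighbours and its incident
edges in `T(G₁)`, plus all of `G₂`), a vertex `b` of `G₂` has degree `d(b) + n₁`, and the vertex
inserted into an edge `uw` has degree `d(u) + d(w)`: its two ends plus its `d(u) + d(w) - 2`
neighbours in the line graph. Summing cubes and expanding with the handshake lemma gives every
term except those of the inserted vertices, where `(d(u) + d(w))³ = d(u)³ + d(w)³ + 3 d(u) d(w)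
(d(u) + d(w))` and each `d(v)³` is counted once per edge at `v`, i.e. `d(v)` times: this is
`M₄ + 3 ReZM`.
-/

open Finset

section Degree

variable {V : Type*} [Finite V] (G : SimpleGraph V)

lemma gdeg_eq_natCard (v : V) : gdeg G v = Nat.card {w // G.Adj v w} := by
  let _ : Fintype (G.neighborSet v) := Fintype.ofFinite _
  rw [gdeg, ← G.card_neighborSet_eq_degree, ← Nat.card_eq_fintype_card]
  rfl

lemma gdeg_eq_degree (v : V) [Fintype (G.neighborSet v)] : gdeg G v = G.degree v := by
  rw [gdeg_eq_natCard, ← G.card_neighborSet_eq_degree, ← Nat.card_eq_fintype_card]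
  rfl

lemma natCard_incident_eq_gdeg (v : V) :
    Nat.card {e : G.edgeSet // v ∈ (e : Sym2 V)} = gdeg G v := by
  classical
  let toIncidence : {e : G.edgeSet // v ∈ (e : Sym2 V)} ≃ G.incidenceSet v :=
    ⟨fun e => ⟨e.1.1, e.1.2, e.2⟩, fun e => ⟨⟨e.1, e.2.1⟩, e.2.2⟩, fun _ => rfl, fun _ => rfl⟩
  rw [Nat.card_congr (toIncidence.trans (G.incidenceSetEquivNeighborSet v)), gdeg_eq_natCard]
  rfl

lemma gdeg_lineGraph_add_two {u w : V} (h : s(u, w) ∈ G.edgeSet) :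
    gdeg G.lineGraph ⟨s(u, w), h⟩ + 2 = gdeg G u + gdeg G w := by
  classical
  let _ := Fintype.ofFinite G.edgeSet
  set e : G.edgeSet := ⟨s(u, w), h⟩
  let incident (v : V) : Finset G.edgeSet := {f | v ∈ (f : Sym2 V)}
  have card_incident (v : V) : #(incident v) = gdeg G v := by
    rw [← natCard_incident_eq_gdeg, Nat.card_eq_fintype_card, Fintype.card_subtype]
  have inter : incident u ∩ incident w = {e} := by
    ext f
    simp [incident, e, Sym2.mem_and_mem_iff (G.ne_of_adj h), Subtype.ext_iff]
  have neighbors : Nat.card {f // G.lineGraph.Adj e f} = #((incident u ∪ incident w).erase e) := by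
    rw [Nat.card_eq_fintype_card, Fintype.card_subtype]
    congr 1
    ext f
    simp [incident, SimpleGraph.lineGraph_adj_iff_exists, e, Sym2.mem_iff, eq_comm]
  have he : e ∈ incident u ∪ incident w := by simp [incident, e]
  rw [gdeg_eq_natCard, neighbors, card_erase_of_mem he, ← card_incident, ← card_incident,
    ← card_union_add_card_inter, inter, card_singleton]
  have := card_pos.mpr ⟨e, he⟩
  omega

end Degree

section Join

variable {A B : Type*} [Finite A] [Finite B]

lemma gdeg_eq_natCard_add_natCard (G : SimpleGraph (A ⊕ B)) (x : A ⊕ B) :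
    gdeg G x = Nat.card {a // G.Adj x (.inl a)} + Nat.card {b // G.Adj x (.inr b)} := by
  rw [gdeg_eq_natCard, Nat.card_congr Equiv.subtypeSum, Nat.card_sum]

variable (H : SimpleGraph A) (K : SimpleGraph B) (P : A → Prop)

lemma gdeg_joinOn_inl_of_pos {a : A} (ha : P a) :
    gdeg (joinOn H K P) (.inl a) = gdeg H a + Nat.card B := by
  rw [gdeg_eq_natCard_add_natCard, gdeg_eq_natCard]
  exact congrArg _ (Nat.card_congr (Equiv.subtypeUnivEquiv fun _ => ha))

lemma gdeg_joinOn_inl_of_neg {a : A} (ha : ¬P a) :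
    gdeg (joinOn H K P) (.inl a) = gdeg H a := by
  have : IsEmpty {b // (joinOn H K P).Adj (.inl a) (.inr b)} := ⟨fun b => ha b.2⟩
  rw [gdeg_eq_natCard_add_natCard, gdeg_eq_natCard,
    Nat.card_of_isEmpty (α := {b // (joinOn H K P).Adj (.inl a) (.inr b)}), add_zero]
  rfl

lemma gdeg_joinOn_inr (b : B) :
    gdeg (joinOn H K P) (.inr b) = gdeg K b + Nat.card {a // P a} := by
  rw [gdeg_eq_natCard_add_natCard, gdeg_eq_natCard, add_comm]
  rfl

end Join

section Total

variable {V : Type*} [Finite V] (G : SimpleGraph V)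

lemma gdeg_Tgraph_inl (v : V) : gdeg (Tgraph G) (.inl v) = 2 * gdeg G v := by
  rw [gdeg_eq_natCard_add_natCard]
  change Nat.card {w // G.Adj v w} + Nat.card {e : G.edgeSet // v ∈ (e : Sym2 V)} = _
  rw [← gdeg_eq_natCard, natCard_incident_eq_gdeg, two_mul]

lemma gdeg_Tgraph_inr {u w : V} (h : s(u, w) ∈ G.edgeSet) :
    gdeg (Tgraph G) (.inr ⟨s(u, w), h⟩) = gdeg G u + gdeg G w := by
  have ends : Nat.card {x // x ∈ s(u, w)} = 2 := by
    rw [← Set.ncard_pair (G.ne_of_adj h), ← Nat.card_coe_set_eq]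
    exact Nat.card_congr (Equiv.subtypeEquivRight fun x => by simp [Sym2.mem_iff])
  have adjacent_edges : Nat.card {f // (Tgraph G).Adj (.inr ⟨s(u, w), h⟩) (.inr f)} =
      gdeg G.lineGraph ⟨s(u, w), h⟩ := by
    rw [gdeg_eq_natCard]
    exact Nat.card_congr (Equiv.subtypeEquivRight fun f =>
      SimpleGraph.lineGraph_adj_iff_exists.symm)
  rw [gdeg_eq_natCard_add_natCard, adjacent_edges, ← gdeg_lineGraph_add_two G h, add_comm]
  exact congrArg _ ends

end Total

section VertexTJoin

variable {V₁ V₂ : Type*} [Finite V₁] [Finite V₂] (G₁ : SimpleGraph V₁) (G₂ : SimpleGraph V₂)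

lemma gdeg_vertexTJoin_inl_inl (v : V₁) :
    gdeg (vertexTJoin G₁ G₂) (.inl (.inl v)) = 2 * gdeg G₁ v + Nat.card V₂ := by
  rw [vertexTJoin, gdeg_joinOn_inl_of_pos (Tgraph G₁) G₂ (fun x => x.isLeft) rfl, gdeg_Tgraph_inl]

lemma gdeg_vertexTJoin_inl_inr (e : G₁.edgeSet) :
    gdeg (vertexTJoin G₁ G₂) (.inl (.inr e)) = gdeg (Tgraph G₁) (.inr e) :=
  gdeg_joinOn_inl_of_neg (Tgraph G₁) G₂ (fun x => x.isLeft) (by simp)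

lemma gdeg_vertexTJoin_inr (b : V₂) :
    gdeg (vertexTJoin G₁ G₂) (.inr b) = gdeg G₂ b + Nat.card V₁ := by
  rw [vertexTJoin, gdeg_joinOn_inr, Nat.card_congr Equiv.sumIsLeft]

end VertexTJoin

section Indices

variable {V : Type*} [Fintype V] (G : SimpleGraph V)

lemma Findex_eq_sum : Findex G = ∑ v, gdeg G v ^ 3 := by
  rw [Findex]; congr!

lemma M1_eq_sum : M1 G = ∑ v, gdeg G v ^ 2 := by
  rw [M1]; congr!

lemma M4_eq_sum : M4 G = ∑ v, gdeg G v ^ 4 := by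
  rw [M4]; congr!

lemma sum_gdeg : ∑ v, gdeg G v = 2 * numEdges G := by
  classical
  simp_rw [gdeg_eq_degree]
  rw [G.sum_degrees_eq_twice_card_edges, numEdges, Nat.card_eq_fintype_card, ← G.edgeFinset_card]

lemma sum_pow_three_mul_gdeg_add (c n : ℕ) :
    ∑ v, (c * gdeg G v + n) ^ 3 = c ^ 3 * Findex G + 3 * c ^ 2 * n * M1 G
      + 6 * c * n ^ 2 * numEdges G + Nat.card V * n ^ 3 := by
  have expand (d : ℕ) : (c * d + n) ^ 3 = c ^ 3 * d ^ 3 + 3 * c ^ 2 * n * d ^ 2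
      + 3 * c * n ^ 2 * d + n ^ 3 := by ring
  simp_rw [expand, sum_add_distrib, ← mul_sum, sum_const, card_univ, smul_eq_mul,
    Findex_eq_sum, M1_eq_sum, Nat.card_eq_fintype_card]
  rw [sum_gdeg]
  ring

variable [Fintype G.edgeSet]

lemma ReZM_eq_sum : ReZM G = ∑ e : G.edgeSet,
    Sym2.lift ⟨fun u v => gdeg G u * gdeg G v * (gdeg G u + gdeg G v),
      fun u v => by dsimp only; ring⟩ (e : Sym2 V) := by
  rw [ReZM]; congr!

lemma sum_edgeSet_lift_add {M : Type*} [AddCommMonoid M] (f : V → M) :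
    ∑ e : G.edgeSet, Sym2.lift ⟨fun u w => f u + f w, fun _ _ => add_comm _ _⟩ (e : Sym2 V) =
      ∑ v, gdeg G v • f v := by
  classical
  calc ∑ e : G.edgeSet, Sym2.lift ⟨fun u w => f u + f w, fun _ _ => add_comm _ _⟩ (e : Sym2 V)
      = ∑ e : G.edgeSet, ∑ v with v ∈ (e : Sym2 V), f v := by
        refine sum_congr rfl fun ⟨e, he⟩ _ => ?_
        induction e using Sym2.ind with
        | _ u w =>
          have : ({v | v ∈ s(u, w)} : Finset V) = {u, w} := by ext; simp [Sym2.mem_iff]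
          rw [this, sum_pair (G.ne_of_adj he)]
          rfl
    _ = ∑ v, ∑ e ∈ ({e | v ∈ (e : Sym2 V)} : Finset G.edgeSet), f v := sum_comm' (by simp)
    _ = ∑ v, gdeg G v • f v := by
        refine sum_congr rfl fun v _ => ?_
        rw [sum_const, ← natCard_incident_eq_gdeg, Nat.card_eq_fintype_card,
          Fintype.card_subtype]

lemma sum_gdeg_Tgraph_inr_pow_three :
    ∑ e : G.edgeSet, gdeg (Tgraph G) (.inr e) ^ 3 = M4 G + 3 * ReZM G := by
  have expand (e : G.edgeSet) : gdeg (Tgraph G) (.inr e) ^ 3 =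
      Sym2.lift ⟨fun u w => gdeg G u ^ 3 + gdeg G w ^ 3, fun _ _ => add_comm _ _⟩ (e : Sym2 V)
      + 3 * Sym2.lift ⟨fun u v => gdeg G u * gdeg G v * (gdeg G u + gdeg G v),
          fun u v => by dsimp only; ring⟩ (e : Sym2 V) := by
    obtain ⟨e, he⟩ := e
    induction e using Sym2.ind with
    | _ u w =>
      rw [gdeg_Tgraph_inr G he]
      dsimp only [Sym2.lift_mk]
      ring
  simp_rw [expand, sum_add_distrib, ← mul_sum, sum_edgeSet_lift_add, ← ReZM_eq_sum, M4_eq_sum,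
    smul_eq_mul, ← pow_succ']

end Indices

lemma Findex_vertexTJoin_eq_sum {V₁ V₂ : Type*} [Fintype V₁] [Fintype V₂]
    (G₁ : SimpleGraph V₁) (G₂ : SimpleGraph V₂) [Fintype G₁.edgeSet] :
    Findex (vertexTJoin G₁ G₂) = ∑ v, (2 * gdeg G₁ v + Nat.card V₂) ^ 3
      + ∑ e : G₁.edgeSet, gdeg (Tgraph G₁) (.inr e) ^ 3
      + ∑ b, (gdeg G₂ b + Nat.card V₁) ^ 3 := by
  simp_rw [Findex_eq_sum, Fintype.sum_sum_type, gdeg_vertexTJoin_inl_inl,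
    gdeg_vertexTJoin_inl_inr, gdeg_vertexTJoin_inr]

theorem Findex_vertexTJoin_general {V₁ V₂ : Type*} [Finite V₁] [Finite V₂]
    (G₁ : SimpleGraph V₁) (G₂ : SimpleGraph V₂)
    (n₁ n₂ m₁ m₂ : ℕ)
    (hn₁ : n₁ = Nat.card V₁) (hn₂ : n₂ = Nat.card V₂)
    (hm₁ : m₁ = numEdges G₁) (hm₂ : m₂ = numEdges G₂) :
    (Findex (vertexTJoin G₁ G₂) : ℤ) =
      8 * (Findex G₁ : ℤ) + (Findex G₂ : ℤ) + 12 * (n₂ : ℤ) * (M1 G₁ : ℤ) + 3 * (n₁ : ℤ) * (M1 G₂ : ℤ)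
        + (M4 G₁ : ℤ) + 3 * (ReZM G₁ : ℤ) + 12 * (m₁ : ℤ) * (n₂ : ℤ) ^ 2 + 6 * (m₂ : ℤ) * (n₁ : ℤ) ^ 2
        + (n₁ : ℤ) * (n₂ : ℤ) * ((n₁ : ℤ) ^ 2 + (n₂ : ℤ) ^ 2) := by
  let _ := Fintype.ofFinite V₁
  let _ := Fintype.ofFinite V₂
  let _ := Fintype.ofFinite G₁.edgeSet
  have vertices₂ := sum_pow_three_mul_gdeg_add G₂ 1 (Nat.card V₁)
  simp only [one_mul] at vertices₂
  rw [Findex_vertexTJoin_eq_sum, sum_pow_three_mul_gdeg_add, vertices₂,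
    sum_gdeg_Tgraph_inr_pow_three]
  subst hn₁ hn₂ hm₁ hm₂
  push_cast
  ring

theorem Findex_vertexTJoin {V₁ V₂ : Type*} [Finite V₁] [Finite V₂]
    (G₁ : SimpleGraph V₁) (G₂ : SimpleGraph V₂)
    (hc₁ : G₁.Connected) (hc₂ : G₂.Connected)
    (n₁ n₂ m₁ m₂ : ℕ)
    (hn₁ : n₁ = Nat.card V₁) (hn₂ : n₂ = Nat.card V₂)
    (hm₁ : m₁ = numEdges G₁) (hm₂ : m₂ = numEdges G₂) :
    (Findex (vertexTJoin G₁ G₂) : ℤ) =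
      8 * (Findex G₁ : ℤ) + (Findex G₂ : ℤ) + 12 * (n₂ : ℤ) * (M1 G₁ : ℤ) + 3 * (n₁ : ℤ) * (M1 G₂ : ℤ)
        + (M4 G₁ : ℤ) + 3 * (ReZM G₁ : ℤ) + 12 * (m₁ : ℤ) * (n₂ : ℤ) ^ 2 + 6 * (m₂ : ℤ) * (n₁ : ℤ) ^ 2
        + (n₁ : ℤ) * (n₂ : ℤ) * ((n₁ : ℤ) ^ 2 + (n₂ : ℤ) ^ 2) :=
  Findex_vertexTJoin_general G₁ G₂ n₁ n₂ m₁ m₂ hn₁ hn₂ hm₁ hm₂
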